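/- Let k ≥ 1 be an integer and let t > 0 be real. Then |R̃_{k+1}(t) + (1/2)·arctan(e^{−πt})| < η_k · √(πk) · T̃_k(t) + (1/2)·e^{−πt}, where η_k := 1/(1 − 2^{1−2k}); that is, the error in the standard approximation of the Riemann–Siegel theta function (with the arctan term omitted) after k terms is bounded by η_k √(πk) T̃_k(t) + (1/2)e^{−πt}. -/

import Mathlib

open MeasureTheory Real

/-- The factor `η_k = 1 / (1 - 2 ^ (1 - 2k))`. -/
noncomputable def eta (k : ℕ) : ℝ := 1 / (1 - (2 : ℝ) ^ ((1 : ℤ) - 2 * k))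

/-- The `j`-th term of the asymptotic series for the Riemann–Siegel theta function. -/
noncomputable def Ttilde (j : ℕ) (t : ℝ) : ℝ :=
  |(Polynomial.aeval ((1 : ℝ) / 2) (Polynomial.bernoulli (2 * j)) : ℝ)| /
    ((4 * (j : ℝ)) * (2 * (j : ℝ) - 1) * t ^ (2 * j - 1))

/-- `Rtildenext k t` is the remainder `R̃_{k+1}(t)` after `k` terms of the series for `ϑ(t)`. -/
noncomputable def Rtildenext (k : ℕ) (t : ℝ) : ℝ :=
  (-∫ u in Set.Ioi (0 : ℝ),
      ((Polynomial.aeval (Int.fract (u + 1 / 2)) (Polynomial.bernoulli (2 * k)) : ℝ) : ℂ) /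
        ((4 * (k : ℂ)) * ((u : ℂ) + Complex.I * t) ^ (2 * k))).im

/-- `Rtilde k t` is the remainder `R̃_k(t)` after `k - 1` terms of the series for `ϑ(t)`. -/
noncomputable def Rtilde (k : ℕ) (t : ℝ) : ℝ := Ttilde k t + Rtildenext k t

/-!
The integrand of `R̃_{k+1}(t)` has modulus at most `|B_{2k}| / (4k (u² + t²)^k)`, because
`|B_{2k}(x)| ≤ |B_{2k}|` on `[0, 1]`. The substitution `u = t tan θ` turns `∫₀^∞ (u² + t²)^(-k) du`
into `t^(1-2k) ∫₀^{π/2} cos^(2k-2) θ dθ`, and the Wallis-type estimate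
`((n + 1) ∫₀^π sinⁿ)² ≤ 2π (n + 2)` bounds this by `√(πk) / ((2k - 1) t^(2k-1))`.
As `B_{2k}(1/2) = -(1 - 2^(1-2k)) B_{2k}`, that is `η_k √(πk) T̃_k(t)`. Finally `0 < arctan y < y`.
-/

open Set

theorem abs_bernoulliFun_two_mul_le {k : ℕ} (hk : k ≠ 0) {x : ℝ} (hx : x ∈ Icc (0 : ℝ) 1) :
    |bernoulliFun (2 * k) x| ≤ |(bernoulli (2 * k) : ℝ)| := by
  -- `c * B_{2k}(x)` is the cosine series `∑ cos (2πnx) / n^(2k)`, largest in modulus at `x = 0`.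
  have hx_sum := hasSum_one_div_nat_pow_mul_cos hk hx
  have h0_sum := hasSum_one_div_nat_pow_mul_cos hk (left_mem_Icc.mpr zero_le_one)
  simp only [mul_zero, cos_zero, mul_one] at h0_sum
  set c : ℝ := (-1) ^ (k + 1) * (2 * π) ^ (2 * k) / 2 / (2 * k).factorial
  have hc : 0 < |c| := abs_pos.mpr (by simp [c, pi_ne_zero, Nat.factorial_ne_zero])
  have key : |c| * |bernoulliFun (2 * k) x| ≤ |c| * |bernoulliFun (2 * k) 0| :=
    calc |c| * |bernoulliFun (2 * k) x| = ‖c * bernoulliFun (2 * k) x‖ := (abs_mul _ _).symm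
      _ ≤ c * bernoulliFun (2 * k) 0 := hx_sum.norm_le_of_bounded h0_sum fun n => by
          simpa [abs_mul] using mul_le_of_le_one_right (by positivity) (abs_cos_le_one _)
      _ ≤ |c| * |bernoulliFun (2 * k) 0| := (le_abs_self _).trans (abs_mul _ _).le
  rw [← bernoulliFun_eval_zero]
  exact le_of_mul_le_mul_left key hc

theorem arctan_lt_self {x : ℝ} (hx : 0 < x) : arctan x < x := by
  simpa only [tan_arctan] using lt_tan (arctan_pos.mpr hx) (arctan_lt_pi_div_two x)

theorem integral_sin_pow_add_two_zero_pi (n : ℕ) :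
    ∫ x in 0..π, sin x ^ (n + 2) = (n + 1) / (n + 2) * ∫ x in 0..π, sin x ^ n := by
  simp [integral_sin_pow]

theorem integral_sin_pow_mul_integral_sin_pow_succ (n : ℕ) :
    (∫ x in 0..π, sin x ^ n) * (∫ x in 0..π, sin x ^ (n + 1)) = 2 * π / (n + 1) := by
  induction n with
  | zero => norm_num [mul_comm]
  | succ n ih =>
    rw [integral_sin_pow_add_two_zero_pi, mul_left_comm, mul_comm _ (∫ x in 0..π, sin x ^ n), ih]
    push_cast
    field_simp
    ring

theorem sq_mul_integral_sin_pow_le (n : ℕ) :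
    ((n + 1) * ∫ x in 0..π, sin x ^ n) ^ 2 ≤ 2 * π * (n + 2) := by
  have hpos := integral_sin_pow_pos n
  have hrec := integral_sin_pow_add_two_zero_pi n
  have hmono := integral_sin_pow_succ_le (n + 1)
  have hprod := integral_sin_pow_mul_integral_sin_pow_succ n
  set I : ℕ → ℝ := fun n => ∫ x in 0..π, sin x ^ n
  calc ((n + 1) * I n) ^ 2 = (n + 1) * (n + 2) * I n * I (n + 2) := by
        simp only [I, hrec]; field_simp
    _ ≤ (n + 1) * (n + 2) * I n * I (n + 1) := by gcongr
    _ = 2 * π * (n + 2) := by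
        rw [mul_assoc _ (I n), hprod]; field_simp

section TanSubstitution

variable {t : ℝ}

theorem Ioo_zero_pi_div_two_subset : Ioo 0 (π / 2) ⊆ Ioo (-(π / 2)) (π / 2) :=
  Ioo_subset_Ioo_left (neg_nonpos.mpr pi_div_two_pos.le)

theorem injOn_mul_tan (ht : t ≠ 0) : InjOn (t * tan ·) (Ioo 0 (π / 2)) := fun _ ha _ hb hab =>
  strictMonoOn_tan.injOn (Ioo_zero_pi_div_two_subset ha) (Ioo_zero_pi_div_two_subset hb)
    (mul_left_cancel₀ ht hab)

theorem image_mul_tan_Ioo (ht : 0 < t) : (t * tan ·) '' Ioo 0 (π / 2) = Ioi 0 := by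
  ext u
  constructor
  · rintro ⟨θ, hθ, rfl⟩
    exact mul_pos ht (tan_pos_of_pos_of_lt_pi_div_two hθ.1 hθ.2)
  · intro hu
    refine ⟨arctan (u / t), ⟨arctan_pos.mpr (div_pos hu ht), arctan_lt_pi_div_two _⟩, ?_⟩
    simp only [tan_arctan, mul_div_cancel₀ _ ht.ne']

theorem hasDerivWithinAt_mul_tan {θ : ℝ} (hθ : θ ∈ Ioo 0 (π / 2)) :
    HasDerivWithinAt (t * tan ·) (t * (1 / cos θ ^ 2)) (Ioo 0 (π / 2)) θ :=
  ((hasDerivAt_tan (cos_pos_of_mem_Ioo (Ioo_zero_pi_div_two_subset hθ)).ne').const_mul t)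
    |>.hasDerivWithinAt

theorem abs_deriv_smul_inv_sq_add_sq_pow_mul_tan (ht : 0 < t) (n : ℕ) {θ : ℝ}
    (hθ : θ ∈ Ioo 0 (π / 2)) :
    |t * (1 / cos θ ^ 2)| • (((t * tan θ) ^ 2 + t ^ 2) ^ (n + 1))⁻¹ =
      cos θ ^ (2 * n) / t ^ (2 * n + 1) := by
  have hcos : 0 < cos θ := cos_pos_of_mem_Ioo (Ioo_zero_pi_div_two_subset hθ)
  have hsq : (t * tan θ) ^ 2 + t ^ 2 = t ^ 2 / cos θ ^ 2 := by
    rw [tan_eq_sin_div_cos]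
    field_simp
    linear_combination sin_sq_add_cos_sq θ
  rw [abs_of_pos (by positivity), smul_eq_mul, hsq, div_pow, inv_div, ← pow_mul, ← pow_mul]
  field_simp
  ring

theorem integrableOn_Ioi_inv_sq_add_sq_pow (ht : 0 < t) (n : ℕ) :
    IntegrableOn (fun u => ((u ^ 2 + t ^ 2) ^ (n + 1))⁻¹) (Ioi 0) := by
  rw [← image_mul_tan_Ioo ht, integrableOn_image_iff_integrableOn_abs_deriv_smul measurableSet_Ioo
    (fun _ => hasDerivWithinAt_mul_tan) (injOn_mul_tan ht.ne'),
    integrableOn_congr_fun (fun _ => abs_deriv_smul_inv_sq_add_sq_pow_mul_tan ht n)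
      measurableSet_Ioo]
  exact (Continuous.integrableOn_Icc (by fun_prop)).mono_set Ioo_subset_Icc_self

theorem integral_Ioi_inv_sq_add_sq_pow (ht : 0 < t) (n : ℕ) :
    ∫ u in Ioi 0, ((u ^ 2 + t ^ 2) ^ (n + 1))⁻¹ =
      (∫ θ in 0..π / 2, cos θ ^ (2 * n)) / t ^ (2 * n + 1) := by
  rw [← image_mul_tan_Ioo ht, integral_image_eq_integral_abs_deriv_smul measurableSet_Ioo
    (fun _ => hasDerivWithinAt_mul_tan) (injOn_mul_tan ht.ne'),
    setIntegral_congr_fun measurableSet_Ioo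
      (fun _ => abs_deriv_smul_inv_sq_add_sq_pow_mul_tan ht n),
    integral_div, intervalIntegral.integral_of_le pi_div_two_pos.le, integral_Ioc_eq_integral_Ioo]

end TanSubstitution

theorem integral_Ioi_inv_sq_add_sq_pow_le {k : ℕ} (hk : k ≠ 0) {t : ℝ} (ht : 0 < t) :
    ∫ u in Ioi 0, ((u ^ 2 + t ^ 2) ^ k)⁻¹ ≤ √(π * k) / ((2 * k - 1) * t ^ (2 * k - 1)) := by
  obtain ⟨n, rfl⟩ := Nat.exists_eq_add_one_of_ne_zero hk
  have hwallis := sq_mul_integral_sin_pow_le (2 * n)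
  have hpos := integral_sin_pow_pos (2 * n)
  have hcancel : (1 / 2 * ∫ x in 0..π, sin x ^ (2 * n)) / t ^ (2 * n + 1) *
      ((2 * n + 1) * t ^ (2 * n + 1)) = (2 * n + 1) * (∫ x in 0..π, sin x ^ (2 * n)) / 2 := by
    field_simp
  rw [integral_Ioi_inv_sq_add_sq_pow ht, EulerSine.integral_cos_pow_eq,
    show 2 * (n + 1) - 1 = 2 * n + 1 by omega, Nat.cast_add_one,
    show 2 * ((n : ℝ) + 1) - 1 = 2 * n + 1 by ring, le_div_iff₀ (by positivity), hcancel,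
    le_sqrt (by positivity) (by positivity)]
  push_cast at hwallis
  linear_combination hwallis / 4

theorem norm_ofReal_add_I_mul_pow (u t : ℝ) (k : ℕ) :
    ‖((u : ℂ) + Complex.I * t) ^ (2 * k)‖ = (u ^ 2 + t ^ 2) ^ k := by
  rw [norm_pow, pow_mul, mul_comm Complex.I, Complex.sq_norm, Complex.normSq_add_mul_I]

theorem abs_Rtildenext_le {k : ℕ} (hk : k ≠ 0) {t : ℝ} (ht : 0 < t) :
    |Rtildenext k t| ≤
      |(bernoulli (2 * k) : ℝ)| / (4 * k) * ∫ u in Ioi 0, ((u ^ 2 + t ^ 2) ^ k)⁻¹ := by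
  obtain ⟨n, rfl⟩ := Nat.exists_eq_add_one_of_ne_zero hk
  rw [Rtildenext, Complex.neg_im, abs_neg, ← integral_const_mul]
  refine (Complex.abs_im_le_norm _).trans ((norm_integral_le_integral_norm _).trans ?_)
  refine integral_mono_of_nonneg (.of_forall fun _ => norm_nonneg _)
    ((integrableOn_Ioi_inv_sq_add_sq_pow ht n).const_mul _) (.of_forall fun u => ?_)
  have hbound := abs_bernoulliFun_two_mul_le hk (unitInterval.fract_mem (u + 1 / 2))
  rw [bernoulliFun, Polynomial.eval_map_algebraMap] at hbound
  dsimp only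
  rw [norm_div, norm_mul, norm_ofReal_add_I_mul_pow, Complex.norm_real, Real.norm_eq_abs,
    Complex.norm_mul, Complex.norm_ofNat, Complex.norm_natCast, ← div_eq_mul_inv, div_div]
  exact div_le_div_of_nonneg_right hbound (by positivity)

theorem eta_mul_abs_bernoulliFun_half {k : ℕ} (hk : k ≠ 0) :
    eta k * |bernoulliFun (2 * k) 2⁻¹| = |(bernoulli (2 * k) : ℝ)| := by
  have hzpow : (2 : ℝ) ^ ((1 : ℤ) - 2 * k) = 2 / 2 ^ (2 * k) := by
    rw [zpow_sub₀ two_ne_zero, zpow_one]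
    norm_cast
  have hlt : 2 / (2 : ℝ) ^ (2 * k) < 1 := by
    rw [div_lt_one (by positivity)]
    calc (2 : ℝ) < 2 ^ 2 := by norm_num
      _ ≤ 2 ^ (2 * k) := pow_le_pow_right₀ one_le_two (by omega)
  rw [bernoulliFun_eval_half, abs_mul, abs_of_neg (sub_neg.mpr hlt), neg_sub, eta, hzpow, one_div,
    inv_mul_cancel_left₀ (sub_pos.mpr hlt).ne']

theorem abs_Rtildenext_add_arctan_lt (k : ℕ) (hk : 1 ≤ k) (t : ℝ) (ht : 0 < t) :
    |Rtildenext k t + 1 / 2 * Real.arctan (Real.exp (-(π * t)))| <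
      eta k * Real.sqrt (π * k) * Ttilde k t + 1 / 2 * Real.exp (-(π * t)) := by
  have hk₀ : k ≠ 0 := Nat.one_le_iff_ne_zero.mp hk
  have hhalf : Polynomial.aeval ((1 : ℝ) / 2) (Polynomial.bernoulli (2 * k)) =
      bernoulliFun (2 * k) 2⁻¹ := by
    rw [bernoulliFun, Polynomial.eval_map_algebraMap, one_div]
  have hR : |Rtildenext k t| ≤ eta k * √(π * k) * Ttilde k t :=
    calc |Rtildenext k t|
        ≤ |(bernoulli (2 * k) : ℝ)| / (4 * k) * ∫ u in Ioi 0, ((u ^ 2 + t ^ 2) ^ k)⁻¹ :=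
          abs_Rtildenext_le hk₀ ht
      _ ≤ |(bernoulli (2 * k) : ℝ)| / (4 * k) * (√(π * k) / ((2 * k - 1) * t ^ (2 * k - 1))) := by
          gcongr
          exact integral_Ioi_inv_sq_add_sq_pow_le hk₀ ht
      _ = eta k * √(π * k) * Ttilde k t := by
          rw [Ttilde, hhalf, ← eta_mul_abs_bernoulliFun_half hk₀]
          field_simp
  have harctan_lt := arctan_lt_self (exp_pos (-(π * t)))
  have harctan_nonneg := arctan_nonneg.mpr (exp_pos (-(π * t))).le
  calc |Rtildenext k t + 1 / 2 * arctan (exp (-(π * t)))|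
      ≤ |Rtildenext k t| + 1 / 2 * arctan (exp (-(π * t))) := by
        simpa only [abs_of_nonneg (by positivity : 0 ≤ 1 / 2 * arctan (exp (-(π * t))))]
          using abs_add_le (Rtildenext k t) (1 / 2 * arctan (exp (-(π * t))))
    _ < eta k * √(π * k) * Ttilde k t + 1 / 2 * exp (-(π * t)) := by linarith
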